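/- (Exponential decay of fused-ANOVA weights on non-fused pairs.) Under the one-way ANOVA model with group proportions n_k/n → ρ_k ∈ (0,∞), for every pair (k,ℓ) with β*_k ≠ β*_ℓ and every δ with 0 < δ < α |β*_k − β*_ℓ|^γ, one has exp(δ√n) · w^{FA}_{kℓ} → 0 almost surely as n → ∞; in particular w^{FA}_{kℓ} / √n → 0 almost surely. -/

import Mathlib

open MeasureTheory ProbabilityTheory Filter Finset
open scoped NNReal ENNReal

noncomputable section

/-- Number of observations among the first `n` that belong to group `k`
(the group size `n_k`). -/
def groupSize {K : ℕ} (κ : ℕ → Fin K) (n : ℕ) (k : Fin K) : ℕ :=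
  ((Finset.range n).filter fun i => κ i = k).card

/-- Empirical mean `ȳ_k` of group `k` among the first `n` observations. -/
def groupMean {Ω : Type*} {K : ℕ} (κ : ℕ → Fin K) (y : ℕ → Ω → ℝ)
    (n : ℕ) (k : Fin K) (ω : Ω) : ℝ :=
  (∑ i ∈ (Finset.range n).filter fun i => κ i = k, y i ω) / (groupSize κ n k : ℝ)

/-- The fused-ANOVA weight `w^FA_{kl} = n_k n_l exp(-α √n |ȳ_k - ȳ_l|^γ)`. -/
def faWeight {Ω : Type*} {K : ℕ} (κ : ℕ → Fin K) (y : ℕ → Ω → ℝ) (α γ : ℝ)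
    (n : ℕ) (k l : Fin K) (ω : Ω) : ℝ :=
  (groupSize κ n k : ℝ) * (groupSize κ n l : ℝ) *
    Real.exp (-(α * Real.sqrt (n : ℕ) * |groupMean κ y n k ω - groupMean κ y n l ω| ^ γ))

/-! By the strong law of large numbers applied along the indices of each group (infinitely many,
since `n_k / n → ρ_k > 0`), the group means converge a.s. to `β⋆_k`, so
`α |ȳ_k - ȳ_l|^γ → α |β⋆_k - β⋆_l|^γ > δ`. As `n_k n_l ≤ n²`, the product `exp(δ√n) w^FA_{kl}`
is eventually at most `n² exp(-(c - δ)√n)` for any `c` strictly between, which tends to `0`. -/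

open Real

theorem tendsto_pow_mul_exp_neg_mul_sqrt_atTop_nhds_zero (m : ℕ) {b : ℝ} (hb : 0 < b) :
    Tendsto (fun x : ℝ => x ^ m * exp (-b * √x)) atTop (nhds 0) := by
  refine ((tendsto_rpow_mul_exp_neg_mul_atTop_nhds_zero (2 * m) b hb).comp
    tendsto_sqrt_atTop).congr' ?_
  filter_upwards [eventually_ge_atTop 0] with x hx
  have hcast : (2 * m : ℝ) = ((2 * m : ℕ) : ℝ) := by norm_cast
  simp only [Function.comp, hcast, rpow_natCast, pow_mul, sq_sqrt hx]

theorem tendsto_pow_mul_exp_sqrt_mul_exp_neg_of_lt {u : ℕ → ℝ} {L δ : ℝ}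
    (hu : Tendsto u atTop (nhds L)) (hδL : δ < L) (m : ℕ) :
    Tendsto (fun n : ℕ => exp (δ * √n) * ((n : ℝ) ^ m * exp (-(u n * √n)))) atTop (nhds 0) := by
  obtain ⟨c, hδc, hcL⟩ := exists_between hδL
  have hbound := (tendsto_pow_mul_exp_neg_mul_sqrt_atTop_nhds_zero m (sub_pos.2 hδc)).comp
    tendsto_natCast_atTop_atTop
  refine tendsto_of_tendsto_of_tendsto_of_le_of_le' tendsto_const_nhds hbound
    (Eventually.of_forall fun n => by positivity) ?_
  filter_upwards [hu.eventually (eventually_ge_nhds hcL)] with n hn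
  have hexp : exp (δ * √n) * exp (-(u n * √n)) ≤ exp (-(c - δ) * √n) := by
    rw [← exp_add, exp_le_exp]
    nlinarith [mul_le_mul_of_nonneg_right hn (sqrt_nonneg n)]
  calc exp (δ * √n) * ((n : ℝ) ^ m * exp (-(u n * √n)))
      = (n : ℝ) ^ m * (exp (δ * √n) * exp (-(u n * √n))) := by ring
    _ ≤ (n : ℝ) ^ m * exp (-(c - δ) * √n) := by gcongr

theorem filter_range_eq_image_nth {p : ℕ → Prop} [DecidablePred p] (hp : {i | p i}.Infinite)
    (n : ℕ) : (range n).filter p = (range (Nat.count p n)).image (Nat.nth p) := by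
  ext i
  simp only [mem_filter, mem_range, mem_image]
  constructor
  · rintro ⟨hin, hpi⟩
    exact ⟨Nat.count p i, Nat.count_strict_mono hpi hin, Nat.nth_count hpi⟩
  · rintro ⟨j, hj, rfl⟩
    exact ⟨(Nat.lt_nth_iff_count_lt hp).mp hj, Nat.nth_mem_of_infinite hp j⟩

theorem tendsto_count_atTop {p : ℕ → Prop} [DecidablePred p] (hp : {i | p i}.Infinite) :
    Tendsto (Nat.count p) atTop atTop :=
  tendsto_atTop_atTop_of_monotone (Nat.count_monotone p)
    fun b => ⟨Nat.nth p b, (Nat.count_nth_of_infinite hp b).ge⟩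

theorem infinite_of_tendsto_count_div {p : ℕ → Prop} [DecidablePred p] {ρ : ℝ} (hρ : ρ ≠ 0)
    (h : Tendsto (fun n => (Nat.count p n : ℝ) / n) atTop (nhds ρ)) : {i | p i}.Infinite := by
  intro hfin
  refine hρ (tendsto_nhds_unique h (tendsto_bdd_div_atTop_nhds_zero
    (b := 0) (B := #hfin.toFinset) (.of_forall fun n => ?_) (.of_forall fun n => ?_)
    tendsto_natCast_atTop_atTop))
  · positivity
  · exact_mod_cast Nat.count_le_card hfin n

/-- The strong law of large numbers along the subsequence of indices satisfying `p`. -/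
theorem ae_tendsto_sum_filter_range_div_count {Ω : Type*} {mΩ : MeasurableSpace Ω}
    {μ : Measure Ω} (X : ℕ → Ω → ℝ) (hint : Integrable (X 0) μ)
    (hindep : Pairwise (Function.onFun (IndepFun · · μ) X))
    (hident : ∀ i, IdentDistrib (X i) (X 0) μ μ)
    {p : ℕ → Prop} [DecidablePred p] (hp : {i | p i}.Infinite) :
    ∀ᵐ ω ∂μ, Tendsto (fun n => (∑ i ∈ (range n).filter p, X i ω) / Nat.count p n)
      atTop (nhds μ[X 0]) := by
  have hslln := strong_law_ae_real (fun j => X (Nat.nth p j))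
    ((hident _).integrable_iff.2 hint)
    (fun i j hij => hindep ((Nat.nth_injective hp).ne hij))
    (fun i => (hident _).trans (hident _).symm)
  rw [(hident _).integral_eq] at hslln
  filter_upwards [hslln] with ω hω
  refine (hω.comp (tendsto_count_atTop hp)).congr fun n => ?_
  simp only [Function.comp, filter_range_eq_image_nth hp,
    sum_image (Nat.nth_injective hp).injOn]

section Anova

variable {K : ℕ} (κ : ℕ → Fin K)

theorem groupSize_eq_count (n : ℕ) (k : Fin K) : groupSize κ n k = Nat.count (κ · = k) n :=
  (Nat.count_eq_card_filter_range _ n).symm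

theorem groupSize_le (n : ℕ) (k : Fin K) : groupSize κ n k ≤ n :=
  (card_filter_le _ _).trans (card_range n).le

theorem groupMean_const_add {Ω : Type*} (β : Fin K → ℝ) (ε : ℕ → Ω → ℝ) {n : ℕ} {k : Fin K}
    (hn : groupSize κ n k ≠ 0) (ω : Ω) :
    groupMean κ (fun i ω => β (κ i) + ε i ω) n k ω = β k + groupMean κ ε n k ω := by
  have hsum : ∑ i ∈ (range n).filter (κ · = k), (β (κ i) + ε i ω)
      = groupSize κ n k * β k + ∑ i ∈ (range n).filter (κ · = k), ε i ω := by
    rw [sum_congr rfl fun i hi => by rw [(mem_filter.1 hi).2], sum_add_distrib, sum_const,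
      nsmul_eq_mul, groupSize]
  rw [groupMean, groupMean, hsum]
  field_simp

theorem tendsto_groupMean_const_add {Ω : Type*} (β : Fin K → ℝ) (ε : ℕ → Ω → ℝ) {k : Fin K}
    (hk : {i | κ i = k}.Infinite) {ω : Ω} {m : ℝ}
    (hε : Tendsto (fun n => groupMean κ ε n k ω) atTop (nhds m)) :
    Tendsto (fun n => groupMean κ (fun i ω => β (κ i) + ε i ω) n k ω) atTop (nhds (β k + m)) := by
  refine (hε.const_add (β k)).congr' ?_
  filter_upwards [(tendsto_count_atTop hk).eventually_ge_atTop 1] with n hn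
  rw [groupMean_const_add κ β ε (by rw [groupSize_eq_count]; omega)]

theorem ae_tendsto_groupMean {Ω : Type*} {mΩ : MeasurableSpace Ω} {μ : Measure Ω}
    (X : ℕ → Ω → ℝ) (hint : Integrable (X 0) μ)
    (hindep : Pairwise (Function.onFun (IndepFun · · μ) X))
    (hident : ∀ i, IdentDistrib (X i) (X 0) μ μ)
    {k : Fin K} (hk : {i | κ i = k}.Infinite) :
    ∀ᵐ ω ∂μ, Tendsto (fun n => groupMean κ X n k ω) atTop (nhds μ[X 0]) := by
  simpa only [groupMean, groupSize_eq_count] using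
    ae_tendsto_sum_filter_range_div_count X hint hindep hident hk

theorem faWeight_nonneg {Ω : Type*} (y : ℕ → Ω → ℝ) (α γ : ℝ) (n : ℕ) (k l : Fin K) (ω : Ω) :
    0 ≤ faWeight κ y α γ n k l ω := by
  unfold faWeight
  positivity

theorem faWeight_le {Ω : Type*} (y : ℕ → Ω → ℝ) (α γ : ℝ) (n : ℕ) (k l : Fin K) (ω : Ω) :
    faWeight κ y α γ n k l ω
      ≤ (n : ℝ) ^ 2 * exp (-(α * |groupMean κ y n k ω - groupMean κ y n l ω| ^ γ * √n)) := by
  have hk : (groupSize κ n k : ℝ) ≤ n := by exact_mod_cast groupSize_le κ n k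
  have hl : (groupSize κ n l : ℝ) ≤ n := by exact_mod_cast groupSize_le κ n l
  rw [faWeight, sq, mul_right_comm α]
  gcongr

end Anova

theorem fusedANOVA_weight_decays_on_nonfused_pair_general
    {Ω : Type*} [MeasureSpace Ω] [IsProbabilityMeasure (ℙ : Measure Ω)]
    {K : ℕ} (κ : ℕ → Fin K) (βstar : Fin K → ℝ) (ε : ℕ → Ω → ℝ)
    (hindep : iIndepFun ε ℙ)
    (hident : ∀ i, IdentDistrib (ε i) (ε 0) ℙ ℙ)
    (hL2 : MemLp (ε 0) 2 ℙ) (hmean : ∫ ω, ε 0 ω ∂ℙ = 0)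
    (y : ℕ → Ω → ℝ) (hy : y = fun i ω => βstar (κ i) + ε i ω)
    (ρ : Fin K → ℝ) (hρ : ∀ k, 0 < ρ k)
    (hprop : ∀ k, Tendsto (fun n => (groupSize κ n k : ℝ) / n) atTop (nhds (ρ k)))
    (α γ : ℝ)
    (k l : Fin K) (hkl : βstar k ≠ βstar l)
    (δ : ℝ) (hδ : 0 < δ) (hδ' : δ < α * |βstar k - βstar l| ^ γ) :
    (∀ᵐ ω ∂ℙ, Tendsto (fun n : ℕ => Real.exp (δ * Real.sqrt n) * faWeight κ y α γ n k l ω)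
        atTop (nhds 0))
    ∧ (∀ᵐ ω ∂ℙ, Tendsto (fun n : ℕ => faWeight κ y α γ n k l ω / Real.sqrt n)
        atTop (nhds 0)) := by
  have hpair : Pairwise (Function.onFun (IndepFun · · ℙ) ε) := fun i j hij => hindep.indepFun hij
  have hinf : ∀ j, {i | κ i = j}.Infinite := fun j =>
    infinite_of_tendsto_count_div (hρ j).ne' (by simpa only [groupSize_eq_count] using hprop j)
  have hmeans : ∀ j, ∀ᵐ ω ∂ℙ, Tendsto (fun n => groupMean κ y n j ω) atTop (nhds (βstar j)) := by
    intro j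
    filter_upwards [ae_tendsto_groupMean κ ε (hL2.integrable one_le_two) hpair hident (hinf j)]
      with ω hω
    simpa only [hy, hmean, add_zero] using tendsto_groupMean_const_add κ βstar ε (hinf j) hω
  have hdecay : ∀ᵐ ω ∂ℙ, Tendsto (fun n : ℕ => exp (δ * √n) * faWeight κ y α γ n k l ω)
      atTop (nhds 0) := by
    filter_upwards [hmeans k, hmeans l] with ω hk hl
    have hgap := (hk.sub hl).abs.rpow_const (p := γ) (.inl (abs_pos.2 (sub_ne_zero.2 hkl)).ne')
    refine tendsto_of_tendsto_of_tendsto_of_le_of_le tendsto_const_nhds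
      (tendsto_pow_mul_exp_sqrt_mul_exp_neg_of_lt (hgap.const_mul α) hδ' 2)
      (fun n => mul_nonneg (exp_pos _).le (faWeight_nonneg κ y α γ n k l ω)) fun n => ?_
    exact mul_le_mul_of_nonneg_left (faWeight_le κ y α γ n k l ω) (exp_pos _).le
  refine ⟨hdecay, ?_⟩
  filter_upwards [hdecay] with ω hω
  have hw : Tendsto (fun n : ℕ => faWeight κ y α γ n k l ω) atTop (nhds 0) :=
    tendsto_of_tendsto_of_tendsto_of_le_of_le tendsto_const_nhds hω
      (fun n => faWeight_nonneg κ y α γ n k l ω)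
      fun n => le_mul_of_one_le_left (faWeight_nonneg κ y α γ n k l ω) (one_le_exp (by positivity))
  exact hw.div_atTop (tendsto_sqrt_atTop.comp tendsto_natCast_atTop_atTop)

/-- **Exponential decay of fused-ANOVA weights on non-fused pairs.**  For a pair
`(k, l)` with `β⋆_k ≠ β⋆_l` and any `0 < δ < α |β⋆_k - β⋆_l|^γ`, one has
`exp(δ√n) w^FA_{kl} → 0` almost surely; in particular `w^FA_{kl}/√n → 0` a.s. -/
theorem fusedANOVA_weight_decays_on_nonfused_pair
    {Ω : Type*} [MeasureSpace Ω] [IsProbabilityMeasure (ℙ : Measure Ω)]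
    {K : ℕ} (κ : ℕ → Fin K) (βstar : Fin K → ℝ) (ε : ℕ → Ω → ℝ)
    (hmeas : ∀ i, Measurable (ε i))
    (hindep : iIndepFun ε ℙ)
    (hident : ∀ i, IdentDistrib (ε i) (ε 0) ℙ ℙ)
    (hL2 : MemLp (ε 0) 2 ℙ) (hmean : ∫ ω, ε 0 ω ∂ℙ = 0)
    (σ : ℝ) (hσ : 0 < σ) (hvar : variance (ε 0) ℙ = σ ^ 2)
    (y : ℕ → Ω → ℝ) (hy : y = fun i ω => βstar (κ i) + ε i ω)
    (ρ : Fin K → ℝ) (hρ : ∀ k, 0 < ρ k)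
    (hprop : ∀ k, Tendsto (fun n => (groupSize κ n k : ℝ) / n) atTop (nhds (ρ k)))
    (α γ : ℝ) (hα : 0 < α) (hγ : 0 < γ)
    (k l : Fin K) (hkl : βstar k ≠ βstar l)
    (δ : ℝ) (hδ : 0 < δ) (hδ' : δ < α * |βstar k - βstar l| ^ γ) :
    (∀ᵐ ω ∂ℙ, Tendsto (fun n : ℕ => Real.exp (δ * Real.sqrt n) * faWeight κ y α γ n k l ω)
        atTop (nhds 0))
    ∧ (∀ᵐ ω ∂ℙ, Tendsto (fun n : ℕ => faWeight κ y α γ n k l ω / Real.sqrt n)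
        atTop (nhds 0)) :=
  fusedANOVA_weight_decays_on_nonfused_pair_general κ βstar ε hindep hident hL2 hmean y hy ρ hρ
    hprop α γ k l hkl δ hδ hδ'
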